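/- arXiv:2401.14737 — 2 statements merged into one kernel-verified Lean document; each statement's English description precedes it below -/
import Mathlib

section
/- An ω-language L is recognized by a deterministic Büchi Parikh automaton if and only if L = \vec{P} = {α ∈ Σ^ω | α[1:i] ∈ P for infinitely many i} for some language P ⊆ Σ* recognized by a deterministic (finite-word) Parikh automaton. -/
/-! Common definitions: semi-linear sets, Parikh automata on finite and infinite words. -/

/-- The linear set with base vector `b` and finite set `P` of period vectors. -/
def LinSet {d : ℕ} {M : Type} [AddCommMonoid M] (b : Fin d → M)
    (P : Finset (Fin d → M)) : Set (Fin d → M) :=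
  {v | ∃ z : (Fin d → M) → ℕ, v = b + ∑ p ∈ P, z p • p}

/-- A set is semi-linear if it is a finite union of linear sets. -/
def SemiLin {d : ℕ} {M : Type} [AddCommMonoid M] (S : Set (Fin d → M)) : Prop :=
  ∃ (n : ℕ) (b : Fin n → Fin d → M) (P : Fin n → Finset (Fin d → M)),
    S = ⋃ i, LinSet (b i) (P i)

/-- The length-`n` prefix of an infinite word. -/
def pref {S : Type} (α : ℕ → S) (n : ℕ) : List S := List.ofFn fun i : Fin n => α i.1

/-- An infinite word is ultimately periodic if it has the form `u v^ω`. -/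
def UltimatelyPeriodic {S : Type} (α : ℕ → S) : Prop :=
  ∃ n p, 0 < p ∧ ∀ i, n ≤ i → α (i + p) = α i

/-- The finite infix `α[m+1 : n]` (0-indexed positions `m, …, n-1`). -/
def infixSeg {S : Type} (α : ℕ → S) (m n : ℕ) : List S :=
  List.ofFn fun j : Fin (n - m) => α (m + j.1)

/-- `W^ω`: infinite concatenations of non-empty words from `W`. -/
def omegaPow {S : Type} (W : Set (List S)) : Set (ℕ → S) :=
  {α | ∃ k : ℕ → ℕ, k 0 = 0 ∧ StrictMono k ∧ ∀ i, infixSeg α (k i) (k (i + 1)) ∈ W}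

/-- A deterministic Parikh automaton with states `Q`, alphabet `S`, dimension `d`,
and a constraint set `C` of vectors over `M` (`M = ℕ`, or `M = ℕ∞` for limit PA). -/
structure DetPA (Q S : Type) (d : ℕ) (M : Type) where
  init : Q
  trans : Q → S → (Fin d → ℕ) × Q
  acc : Q → Prop
  C : Set (Fin d → M)

namespace DetPA

variable {Q S M : Type} {d : ℕ}

/-- The run of `A` from state `p` on the infinite word `α`: state after `i` letters. -/
def run (A : DetPA Q S d M) (p : Q) (α : ℕ → S) : ℕ → Q
  | 0 => p
  | i + 1 => (A.trans (A.run p α i) (α i)).2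

/-- The state of the unique run of `A` on `α` after `i` letters. -/
def stateAt (A : DetPA Q S d M) (α : ℕ → S) : ℕ → Q := A.run A.init α

/-- The vector of the `i`-th transition of the unique run of `A` on `α`. -/
def step (A : DetPA Q S d M) (α : ℕ → S) (i : ℕ) : Fin d → ℕ :=
  (A.trans (A.stateAt α i) (α i)).1

/-- Sum of transition vectors of the run of `A` on `α` on positions `m, …, n-1`. -/
def vecSum (A : DetPA Q S d M) (α : ℕ → S) (m n : ℕ) : Fin d → ℕ :=
  ∑ i ∈ Finset.Ico m n, A.step α i

/-- The state reached when reading a finite word from state `p`. -/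
def runList (A : DetPA Q S d M) : Q → List S → Q
  | p, [] => p
  | p, a :: w => A.runList (A.trans p a).2 w

/-- The sum of transition vectors collected when reading a finite word from state `p`. -/
def sumList (A : DetPA Q S d M) : Q → List S → (Fin d → ℕ)
  | _, [] => 0
  | p, a :: w => (A.trans p a).1 + A.sumList (A.trans p a).2 w

/-- Finite-word acceptance: end in an accepting state with vector sum in `C`. -/
def AcceptsWord (A : DetPA Q S d ℕ) (w : List S) : Prop :=
  A.acc (A.runList A.init w) ∧ A.sumList A.init w ∈ A.C

/-- The run visits accepting states infinitely often. -/
def InfAcc (A : DetPA Q S d M) (α : ℕ → S) : Prop :=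
  ∀ n, ∃ i, n ≤ i ∧ A.acc (A.stateAt α i)

/-- Reachability condition. -/
def ReachAccept (A : DetPA Q S d ℕ) (α : ℕ → S) : Prop :=
  ∃ i, 1 ≤ i ∧ A.acc (A.stateAt α i) ∧ A.vecSum α 0 i ∈ A.C

/-- Reachability-regular condition. -/
def ReachRegAccept (A : DetPA Q S d ℕ) (α : ℕ → S) : Prop :=
  A.ReachAccept α ∧ A.InfAcc α

/-- Büchi condition. -/
def BuchiAccept (A : DetPA Q S d ℕ) (α : ℕ → S) : Prop :=
  ∀ n, ∃ i, n ≤ i ∧ 1 ≤ i ∧ A.acc (A.stateAt α i) ∧ A.vecSum α 0 i ∈ A.C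

/-- Weak reset condition. -/
def WeakResetAccept (A : DetPA Q S d ℕ) (α : ℕ → S) : Prop :=
  ∃ k : ℕ → ℕ, k 0 = 0 ∧ StrictMono k ∧
    (∀ i, A.acc (A.stateAt α (k (i + 1)))) ∧
    (∀ i, A.vecSum α (k i) (k (i + 1)) ∈ A.C)

/-- Strong reset condition: accepting states occur infinitely often, and between any
two consecutive accepting positions (and from position `0` to the first one) the
collected vector lies in `C`. -/
def StrongResetAccept (A : DetPA Q S d ℕ) (α : ℕ → S) : Prop :=
  (∀ n, ∃ i, n ≤ i ∧ 1 ≤ i ∧ A.acc (A.stateAt α i)) ∧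
  ∀ m n, m < n → (m = 0 ∨ (1 ≤ m ∧ A.acc (A.stateAt α m))) →
    A.acc (A.stateAt α n) →
    (∀ j, m < j → j < n → ¬ A.acc (A.stateAt α j)) →
    A.vecSum α m n ∈ A.C

/-- The extended Parikh image of the unique run of `A` on `α`: componentwise the
supremum in `ℕ∞` of the partial sums (`∞` iff the component is incremented
infinitely often, else the finite total sum). -/
noncomputable def limImage (A : DetPA Q S d M) (α : ℕ → S) : Fin d → ℕ∞ :=
  fun j => ⨆ n, (A.vecSum α 0 n j : ℕ∞)

/-- Limit condition. -/
def LimitAccept (A : DetPA Q S d ℕ∞) (α : ℕ → S) : Prop :=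
  A.InfAcc α ∧ A.limImage α ∈ A.C

end DetPA

/-- `U` is recognized by a deterministic finite-word Parikh automaton. -/
def DetPARecogFin {S : Type} (U : Set (List S)) : Prop :=
  ∃ (d : ℕ) (Q : Type) (_ : Finite Q) (A : DetPA Q S d ℕ),
    SemiLin A.C ∧ U = {w | A.AcceptsWord w}

/-- `L` is recognized by a deterministic reachability PA. -/
def DetReachRecog {S : Type} (L : Set (ℕ → S)) : Prop :=
  ∃ (d : ℕ) (Q : Type) (_ : Finite Q) (A : DetPA Q S d ℕ),
    SemiLin A.C ∧ L = {α | A.ReachAccept α}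

/-- `L` is recognized by a deterministic reachability-regular PA. -/
def DetReachRegRecog {S : Type} (L : Set (ℕ → S)) : Prop :=
  ∃ (d : ℕ) (Q : Type) (_ : Finite Q) (A : DetPA Q S d ℕ),
    SemiLin A.C ∧ L = {α | A.ReachRegAccept α}

/-- `L` is recognized by a deterministic Büchi PA. -/
def DetBuchiRecog {S : Type} (L : Set (ℕ → S)) : Prop :=
  ∃ (d : ℕ) (Q : Type) (_ : Finite Q) (A : DetPA Q S d ℕ),
    SemiLin A.C ∧ L = {α | A.BuchiAccept α}

/-- `L` is recognized by a deterministic weak reset PA. -/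
def DetWeakResetRecog {S : Type} (L : Set (ℕ → S)) : Prop :=
  ∃ (d : ℕ) (Q : Type) (_ : Finite Q) (A : DetPA Q S d ℕ),
    SemiLin A.C ∧ L = {α | A.WeakResetAccept α}

/-- `L` is recognized by a deterministic strong reset PA. -/
def DetStrongResetRecog {S : Type} (L : Set (ℕ → S)) : Prop :=
  ∃ (d : ℕ) (Q : Type) (_ : Finite Q) (A : DetPA Q S d ℕ),
    SemiLin A.C ∧ L = {α | A.StrongResetAccept α}

/-- `L` is recognized by a deterministic limit PA (constraint set over `ℕ∞`). -/
def DetLimitRecog {S : Type} (L : Set (ℕ → S)) : Prop :=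
  ∃ (d : ℕ) (Q : Type) (_ : Finite Q) (A : DetPA Q S d ℕ∞),
    SemiLin A.C ∧ L = {α | A.LimitAccept α}

/-- A nondeterministic Parikh automaton. -/
structure NPA (Q S : Type) (d : ℕ) where
  init : Q
  trans : Q → S → (Fin d → ℕ) → Q → Prop
  acc : Q → Prop
  C : Set (Fin d → ℕ)

namespace NPA

variable {Q S : Type} {d : ℕ}

/-- `r, v` form a run of `A` on the infinite word `α`. -/
def IsRun (A : NPA Q S d) (α : ℕ → S) (r : ℕ → Q) (v : ℕ → Fin d → ℕ) : Prop :=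
  r 0 = A.init ∧ ∀ i, A.trans (r i) (α i) (v i) (r (i + 1))

/-- Partial sums of the vectors of a run over positions `m, …, n-1`. -/
def partSum (v : ℕ → Fin d → ℕ) (m n : ℕ) : Fin d → ℕ := ∑ i ∈ Finset.Ico m n, v i

/-- Nondeterministic reachability-regular acceptance. -/
def ReachRegAccept (A : NPA Q S d) (α : ℕ → S) : Prop :=
  ∃ r v, A.IsRun α r v ∧ (∃ i, 1 ≤ i ∧ A.acc (r i) ∧ partSum v 0 i ∈ A.C) ∧
    ∀ n, ∃ i, n ≤ i ∧ A.acc (r i)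

/-- Nondeterministic strong reset acceptance. -/
def StrongResetAccept (A : NPA Q S d) (α : ℕ → S) : Prop :=
  ∃ r v, A.IsRun α r v ∧
    (∀ n, ∃ i, n ≤ i ∧ 1 ≤ i ∧ A.acc (r i)) ∧
    ∀ m n, m < n → (m = 0 ∨ (1 ≤ m ∧ A.acc (r m))) → A.acc (r n) →
      (∀ j, m < j → j < n → ¬ A.acc (r j)) → partSum v m n ∈ A.C

/-- Nondeterministic weak reset acceptance. -/
def WeakResetAccept (A : NPA Q S d) (α : ℕ → S) : Prop :=
  ∃ r v, A.IsRun α r v ∧ ∃ k : ℕ → ℕ, k 0 = 0 ∧ StrictMono k ∧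
    (∀ i, A.acc (r (k (i + 1)))) ∧ (∀ i, partSum v (k i) (k (i + 1)) ∈ A.C)

/-- Runs of a nondeterministic PA on a finite word, from state `p` to state `q`
collecting vector sum `v`. -/
def ListRun (A : NPA Q S d) : Q → List S → (Fin d → ℕ) → Q → Prop
  | p, [], v, q => q = p ∧ v = 0
  | p, a :: w, v, q => ∃ u p', A.trans p a u p' ∧ ∃ v', A.ListRun p' w v' q ∧ v = u + v'

/-- Finite-word acceptance for a nondeterministic PA. -/
def AcceptsWord (A : NPA Q S d) (w : List S) : Prop :=
  ∃ v q, A.ListRun A.init w v q ∧ A.acc q ∧ v ∈ A.C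

end NPA

/-- `L` is recognized by a (nondeterministic) reachability-regular PA. -/
def NPAReachRegRecog {S : Type} (L : Set (ℕ → S)) : Prop :=
  ∃ (d : ℕ) (Q : Type) (_ : Finite Q) (A : NPA Q S d),
    SemiLin A.C ∧ L = {α | A.ReachRegAccept α}

/-- `L` is recognized by a (nondeterministic) strong reset PA. -/
def NPAStrongResetRecog {S : Type} (L : Set (ℕ → S)) : Prop :=
  ∃ (d : ℕ) (Q : Type) (_ : Finite Q) (A : NPA Q S d),
    SemiLin A.C ∧ L = {α | A.StrongResetAccept α}

/-- `L` is recognized by a (nondeterministic) weak reset PA. -/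
def NPAWeakResetRecog {S : Type} (L : Set (ℕ → S)) : Prop :=
  ∃ (d : ℕ) (Q : Type) (_ : Finite Q) (A : NPA Q S d),
    SemiLin A.C ∧ L = {α | A.WeakResetAccept α}

/-- A nondeterministic Büchi automaton. -/
structure NBA (Q S : Type) where
  init : Q
  trans : Q → S → Q → Prop
  acc : Q → Prop

/-- Büchi acceptance. -/
def NBA.Accepts {Q S : Type} (B : NBA Q S) (α : ℕ → S) : Prop :=
  ∃ r : ℕ → Q, r 0 = B.init ∧ (∀ i, B.trans (r i) (α i) (r (i + 1))) ∧
    ∀ n, ∃ i, n ≤ i ∧ B.acc (r i)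

/-- `L` is ω-regular: recognized by a nondeterministic Büchi automaton. -/
def OmegaRegular {S : Type} (L : Set (ℕ → S)) : Prop :=
  ∃ (Q : Type) (_ : Finite Q) (B : NBA Q S), L = {α | B.Accepts α}

lemma DetPA.runList_append {Q S M : Type} {d : ℕ} (A : DetPA Q S d M)
    (p : Q) (u v : List S) : A.runList p (u ++ v) = A.runList (A.runList p u) v := by
  induction u generalizing p with
  | nil => rfl
  | cons a w ih => simp [DetPA.runList, ih]

lemma DetPA.sumList_append {Q S M : Type} {d : ℕ} (A : DetPA Q S d M)
    (p : Q) (u v : List S) :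
    A.sumList p (u ++ v) = A.sumList p u + A.sumList (A.runList p u) v := by
  induction u generalizing p with
  | nil => simp [DetPA.sumList, DetPA.runList]
  | cons a w ih => simp [DetPA.sumList, DetPA.runList, ih, add_assoc]

lemma pref_succ {S : Type} (α : ℕ → S) (n : ℕ) :
    pref α (n + 1) = pref α n ++ [α n] := by
  rw [pref, List.ofFn_succ', pref]
  simp [List.concat_eq_append]

lemma DetPA.runList_pref {Q S M : Type} {d : ℕ} (A : DetPA Q S d M)
    (α : ℕ → S) (n : ℕ) : A.runList A.init (pref α n) = A.stateAt α n := by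
  induction n with
  | zero => rfl
  | succ n ih =>
    rw [pref_succ, A.runList_append, ih]
    rfl

lemma DetPA.sumList_pref {Q S : Type} {d : ℕ} {M : Type} (A : DetPA Q S d M)
    (α : ℕ → S) (n : ℕ) : A.sumList A.init (pref α n) = A.vecSum α 0 n := by
  induction n with
  | zero => simp [pref, DetPA.sumList, DetPA.vecSum]
  | succ n ih =>
    have hv : A.vecSum α 0 (n + 1) = A.vecSum α 0 n + A.step α n := by
      unfold DetPA.vecSum
      rw [Finset.sum_Ico_succ_top (Nat.zero_le _)]
    rw [pref_succ, A.sumList_append, ih, A.runList_pref, hv]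
    simp [DetPA.sumList, DetPA.step]

/-- Product with a Bool flag tracking "at least one letter read". -/
def boolProd {Q S : Type} {d : ℕ} (A : DetPA Q S d ℕ) : DetPA (Q × Bool) S d ℕ where
  init := (A.init, false)
  trans := fun p a => ((A.trans p.1 a).1, ((A.trans p.1 a).2, true))
  acc := fun p => A.acc p.1 ∧ p.2 = true
  C := A.C

lemma boolProd_runList {Q S : Type} {d : ℕ} (A : DetPA Q S d ℕ)
    (w : List S) (p : Q) (b : Bool) :
    (boolProd A).runList (p, b) w = (A.runList p w, if w.length = 0 then b else true) := by
  induction w generalizing p b with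
  | nil => rfl
  | cons a v ih =>
    show (boolProd A).runList ((A.trans p a).2, true) v = _
    rw [ih]
    simp [DetPA.runList]

lemma boolProd_sumList {Q S : Type} {d : ℕ} (A : DetPA Q S d ℕ)
    (w : List S) (p : Q) (b : Bool) :
    (boolProd A).sumList (p, b) w = A.sumList p w := by
  induction w generalizing p b with
  | nil => rfl
  | cons a v ih =>
    show (A.trans p a).1 + (boolProd A).sumList ((A.trans p a).2, true) v = _
    rw [ih]
    rfl

/-- an ω-language is deterministic Büchi PA recognizable iff it is of the
form `\vec P` (infinitely many prefixes in `P`) for `P` recognized by a det. finite-word PA. -/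
theorem detBuchi_iff_detPA_limit {S : Type} [Finite S] (L : Set (ℕ → S)) :
    DetBuchiRecog L ↔
      ∃ P : Set (List S), DetPARecogFin P ∧
        L = {α | ∀ m, ∃ i, m ≤ i ∧ pref α i ∈ P} := by
  constructor
  · rintro ⟨d, Q, hQ, A, hC, rfl⟩
    refine ⟨{w | A.AcceptsWord w ∧ 1 ≤ w.length}, ?_, ?_⟩
    · refine ⟨d, Q × Bool, by infer_instance, boolProd A, hC, ?_⟩
      ext w
      have h1 : (boolProd A).init = (A.init, false) := rfl
      simp only [Set.mem_setOf_eq, DetPA.AcceptsWord, h1,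
        boolProd_runList, boolProd_sumList]
      show A.AcceptsWord w ∧ 1 ≤ w.length ↔
        (A.acc (A.runList A.init w) ∧ (if w.length = 0 then false else true) = true) ∧
          A.sumList A.init w ∈ A.C
      cases w with
      | nil => simp [DetPA.AcceptsWord]
      | cons a v =>
        simp only [DetPA.AcceptsWord, List.length_cons, Nat.succ_ne_zero, if_neg]
        constructor
        · rintro ⟨⟨h2, h3⟩, _⟩; exact ⟨⟨h2, rfl⟩, h3⟩
        · rintro ⟨⟨h2, _⟩, h3⟩; exact ⟨⟨h2, h3⟩, Nat.succ_le_succ (Nat.zero_le _)⟩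
    · ext α
      simp only [Set.mem_setOf_eq, DetPA.BuchiAccept, DetPA.AcceptsWord,
        A.runList_pref, A.sumList_pref]
      constructor
      · intro h m
        obtain ⟨i, hmi, h1, hacc, hv⟩ := h m
        refine ⟨i, hmi, ⟨hacc, hv⟩, ?_⟩
        simpa [pref] using h1
      · intro h n
        obtain ⟨i, hmi, ⟨hacc, hv⟩, hlen⟩ := h n
        refine ⟨i, hmi, ?_, hacc, hv⟩
        simpa [pref] using hlen
  · rintro ⟨P, ⟨d, Q, hQ, A, hC, rfl⟩, rfl⟩
    refine ⟨d, Q, hQ, A, hC, ?_⟩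
    ext α
    simp only [Set.mem_setOf_eq, DetPA.BuchiAccept, DetPA.AcceptsWord,
      A.runList_pref, A.sumList_pref]
    constructor
    · intro h n
      obtain ⟨i, hni, hacc, hv⟩ := h (max n 1)
      exact ⟨i, le_trans (le_max_left _ _) hni, le_trans (le_max_right _ _) hni, hacc, hv⟩
    · intro h n
      obtain ⟨i, hni, _, hacc, hv⟩ := h n
      exact ⟨i, hni, hacc, hv⟩
end

section
/- The ω-language L = {aⁿbⁿ | n ≥ 1} · {a,b}^ω is recognized by a deterministic reachability Parikh automaton but not by any deterministic strong reset Parikh automaton. -/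
/-- The ω-language `{aⁿbⁿ | n ≥ 1} · {a,b}^ω` over `{a,b} = Bool`
(`a := true`, `b := false`). -/
def LanbnPrefix : Set (ℕ → Bool) :=
  {α | ∃ n, 1 ≤ n ∧ (∀ i, i < n → α i = true) ∧ ∀ i, n ≤ i → i < 2 * n → α i = false}

/-! The automaton `anbnPA` counts the `a`s and then the `b`s of a prefix `aᵐbᵏ` and accepts
when the two counts agree.

Against a deterministic strong reset PA `A` for the language, take a state visited infinitely
often by the run on `a^ω`. The run on `aᵐb^ω` after position `m` depends only on the state
reached there, so there are `n < n'` at which that state is visited such that the run on the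
accepted word `aⁿb^ω` accepts at some position in `(n, 2n]`. The corresponding position
`p ∈ (n', n' + n]` of the run on `aⁿ'bⁿa^ω ∉ L` is then accepting, so no reset segment crosses
it: the segments ending by `p` are reset segments of the accepted word `aⁿ'b^ω`, and those
starting after `n'` are reset segments of the accepted word `aⁿbⁿa^ω` shifted by `n' - n`, with
the same vector sums. Hence `A` accepts `aⁿ'bⁿa^ω`. -/

namespace DetPA

variable {Q S M : Type} {d : ℕ} (A : DetPA Q S d M)

theorem stateAt_succ (α : ℕ → S) (i : ℕ) :
    A.stateAt α (i + 1) = (A.trans (A.stateAt α i) (α i)).2 := rfl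

theorem stateAt_congr {α β : ℕ → S} {i : ℕ} (h : ∀ j < i, α j = β j) :
    A.stateAt α i = A.stateAt β i := by
  induction i with
  | zero => rfl
  | succ i ih => rw [stateAt_succ, stateAt_succ, ih fun j hj => h j (by omega), h i (by omega)]

theorem vecSum_congr {α β : ℕ → S} {m n : ℕ} (h : ∀ j < n, α j = β j) :
    A.vecSum α m n = A.vecSum β m n := by
  refine Finset.sum_congr rfl fun i hi => ?_
  have hin := (Finset.mem_Ico.mp hi).2
  rw [step, step, A.stateAt_congr fun j hj => h j (by omega), h i hin]

theorem run_add (p : Q) (α : ℕ → S) (i j : ℕ) :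
    A.run p α (i + j) = A.run (A.run p α i) (fun k => α (i + k)) j := by
  induction j with
  | zero => rfl
  | succ j ih => rw [← add_assoc, run, ih, run]

theorem stateAt_add_eq {α β : ℕ → S} {p q : ℕ} (h₀ : A.stateAt α p = A.stateAt β q)
    (h : ∀ j, α (p + j) = β (q + j)) (j : ℕ) :
    A.stateAt α (p + j) = A.stateAt β (q + j) := by
  rw [stateAt, stateAt, run_add, run_add, ← stateAt, ← stateAt, h₀, funext h]

theorem vecSum_add_eq {α β : ℕ → S} {p q : ℕ} (h₀ : A.stateAt α p = A.stateAt β q)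
    (h : ∀ j, α (p + j) = β (q + j)) (i j : ℕ) :
    A.vecSum α (p + i) (p + j) = A.vecSum β (q + i) (q + j) := by
  rw [vecSum, vecSum, add_comm p i, add_comm p j, add_comm q i, add_comm q j,
    ← Finset.sum_Ico_add, ← Finset.sum_Ico_add]
  refine Finset.sum_congr rfl fun k _ => ?_
  rw [step, step, A.stateAt_add_eq h₀ h, h]

def IsResetSeg (α : ℕ → S) (m n : ℕ) : Prop :=
  m < n ∧ (m = 0 ∨ (1 ≤ m ∧ A.acc (A.stateAt α m))) ∧ A.acc (A.stateAt α n) ∧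
    ∀ j, m < j → j < n → ¬ A.acc (A.stateAt α j)

theorem isResetSeg_congr {α β : ℕ → S} {m n : ℕ} (h : ∀ j < n, α j = β j)
    (hs : A.IsResetSeg α m n) : A.IsResetSeg β m n := by
  obtain ⟨hmn, hm, hn, hgap⟩ := hs
  have hst : ∀ i ≤ n, A.stateAt α i = A.stateAt β i :=
    fun i hi => A.stateAt_congr fun j hj => h j (by omega)
  refine ⟨hmn, ?_, hst n le_rfl ▸ hn, fun j hmj hjn => hst j hjn.le ▸ hgap j hmj hjn⟩
  exact hm.imp_right fun ⟨h1, hacc⟩ => ⟨h1, hst m hmn.le ▸ hacc⟩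

theorem isResetSeg_add {α β : ℕ → S} {p q : ℕ} (h₀ : A.stateAt α p = A.stateAt β q)
    (h : ∀ j, α (p + j) = β (q + j)) (hp : 1 ≤ p) {i j : ℕ}
    (hs : A.IsResetSeg α (p + i) (p + j)) : A.IsResetSeg β (q + i) (q + j) := by
  obtain ⟨hij, hm, hn, hgap⟩ := hs
  have hacc : A.acc (A.stateAt β (q + i)) := by
    rw [← A.stateAt_add_eq h₀ h]
    exact (hm.resolve_left (by omega)).2
  refine ⟨by omega, ?_, A.stateAt_add_eq h₀ h j ▸ hn, fun k hik hkj => ?_⟩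
  · rcases Nat.eq_zero_or_pos (q + i) with h0 | h0
    · exact Or.inl h0
    · exact Or.inr ⟨h0, hacc⟩
  · obtain ⟨k, rfl⟩ := Nat.exists_eq_add_of_le (show q ≤ k by omega)
    rw [← A.stateAt_add_eq h₀ h]
    exact hgap (p + k) (by omega) (by omega)

theorem strongResetAccept_iff {A : DetPA Q S d ℕ} {α : ℕ → S} :
    A.StrongResetAccept α ↔ (∀ n, ∃ i, n ≤ i ∧ 1 ≤ i ∧ A.acc (A.stateAt α i)) ∧
      ∀ m n, A.IsResetSeg α m n → A.vecSum α m n ∈ A.C := by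
  simp only [StrongResetAccept, IsResetSeg, and_imp]

end DetPA

def aPowBOmega (m : ℕ) : ℕ → Bool := fun i => decide (i < m)

def aPowBPowAOmega (p q : ℕ) : ℕ → Bool := fun i => decide (i < p ∨ p + q ≤ i)

theorem aPowBOmega_mem {m : ℕ} (hm : 1 ≤ m) : aPowBOmega m ∈ LanbnPrefix :=
  ⟨m, hm, fun i hi => by simp [aPowBOmega, hi], fun i hi _ => by simp [aPowBOmega, hi]⟩

theorem aPowBPowAOmega_self_mem {n : ℕ} (hn : 1 ≤ n) : aPowBPowAOmega n n ∈ LanbnPrefix :=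
  ⟨n, hn, fun i hi => by simp [aPowBPowAOmega, hi],
    fun i hi hi' => by simp [aPowBPowAOmega]; omega⟩

theorem aPowBPowAOmega_not_mem {p q : ℕ} (hqp : q < p) : aPowBPowAOmega p q ∉ LanbnPrefix := by
  rintro ⟨m, hm, -, hb⟩
  by_cases hmp : m < p
  · simpa [aPowBPowAOmega, hmp] using hb m le_rfl (by omega)
  · have := hb (2 * m - 1) (by omega) (by omega)
    simp [aPowBPowAOmega] at this
    omega

namespace DetPA

variable {Q : Type} {d : ℕ} (A : DetPA Q Bool d ℕ)

theorem stateAt_aPowBOmega_add_eq {m m' : ℕ}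
    (h : A.stateAt (fun _ => true) m = A.stateAt (fun _ => true) m') (j : ℕ) :
    A.stateAt (aPowBOmega m) (m + j) = A.stateAt (aPowBOmega m') (m' + j) := by
  have hpre : ∀ l, A.stateAt (aPowBOmega l) l = A.stateAt (fun _ => true) l :=
    fun l => A.stateAt_congr fun k hk => by simp [aPowBOmega, hk]
  exact A.stateAt_add_eq (by rw [hpre, hpre, h]) (fun k => by simp [aPowBOmega]) j

theorem strongResetAccept_aPowBPowAOmega {n n' i : ℕ} (hnn' : n < n')
    (hstate : A.stateAt (fun _ => true) n' = A.stateAt (fun _ => true) n)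
    (hni : n < i) (hin : i ≤ 2 * n) (hacc : A.acc (A.stateAt (aPowBOmega n) i))
    (hβ : A.StrongResetAccept (aPowBOmega n'))
    (hξ : A.StrongResetAccept (aPowBPowAOmega n n)) :
    A.StrongResetAccept (aPowBPowAOmega n' n) := by
  have hpre₀ : ∀ l, A.stateAt (aPowBPowAOmega l n) l = A.stateAt (fun _ => true) l :=
    fun l => A.stateAt_congr fun k hk => by simp [aPowBPowAOmega, hk]
  have h₀ : A.stateAt (aPowBPowAOmega n' n) n' = A.stateAt (aPowBPowAOmega n n) n := by
    rw [hpre₀, hpre₀, hstate]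
  have hshift : ∀ j, aPowBPowAOmega n' n (n' + j) = aPowBPowAOmega n n (n + j) := fun j => by
    simp only [aPowBPowAOmega, decide_eq_decide]; omega
  have hpre : ∀ j < n' + n, aPowBPowAOmega n' n j = aPowBOmega n' j := fun j hj => by
    simp only [aPowBPowAOmega, aPowBOmega, decide_eq_decide]; omega
  have hacc' : A.acc (A.stateAt (aPowBPowAOmega n' n) (n' + (i - n))) := by
    have hξi : A.stateAt (aPowBPowAOmega n n) i = A.stateAt (aPowBOmega n) i :=
      A.stateAt_congr fun k hk => by
        simp only [aPowBPowAOmega, aPowBOmega, decide_eq_decide]; omega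
    rwa [A.stateAt_add_eq h₀ hshift, Nat.add_sub_cancel' hni.le, hξi]
  rw [strongResetAccept_iff] at hβ hξ ⊢
  refine ⟨fun N => ?_, fun m k hs => ?_⟩
  · obtain ⟨j, hj, -, hjacc⟩ := hξ.1 (N + n)
    refine ⟨n' + (j - n), by omega, by omega, ?_⟩
    rwa [A.stateAt_add_eq h₀ hshift, Nat.add_sub_cancel' (by omega)]
  by_cases hk : k ≤ n' + n
  · rw [A.vecSum_congr fun j hj => hpre j (by omega)]
    exact hβ.2 m k (A.isResetSeg_congr (fun j hj => hpre j (by omega)) hs)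
  by_cases hm : n' ≤ m
  · obtain ⟨m, rfl⟩ := Nat.exists_eq_add_of_le hm
    obtain ⟨k, rfl⟩ := Nat.exists_eq_add_of_le (hm.trans hs.1.le)
    rw [A.vecSum_add_eq h₀ hshift]
    exact hξ.2 _ _ (A.isResetSeg_add h₀ hshift (by omega) hs)
  · exact absurd hacc' (hs.2.2.2 _ (by omega) (by omega))

end DetPA

inductive AnBnState
  | readA | readB | reject
  deriving DecidableEq

instance : Fintype AnBnState := ⟨{.readA, .readB, .reject}, fun q => by cases q <;> simp⟩

def anbnPA : DetPA AnBnState Bool 2 ℕ where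
  init := .readA
  trans
    | .readA, true => (![1, 0], .readA)
    | .readA, false => (![0, 1], .readB)
    | .readB, false => (![0, 1], .readB)
    | .readB, true => (0, .reject)
    | .reject, _ => (0, .reject)
  acc q := q = .readB
  C := {v | v 0 = v 1}

theorem anbnPA_C_semiLin : SemiLin anbnPA.C := by
  refine ⟨1, fun _ => 0, fun _ => {![1, 1]}, Set.ext fun v => ?_⟩
  simp only [Set.mem_iUnion, LinSet, Finset.sum_singleton, zero_add, exists_const]
  constructor
  · intro hv
    refine ⟨fun _ => v 0, funext fun j => ?_⟩
    fin_cases j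
    · simp
    · simpa using hv.symm
  · rintro ⟨z, rfl⟩
    simp [anbnPA]

section anbnPA

variable {α : ℕ → Bool} {i : ℕ}

theorem anbnPA_stateAt_succ_eq_readA :
    anbnPA.stateAt α (i + 1) = .readA ↔ anbnPA.stateAt α i = .readA ∧ α i = true := by
  rw [DetPA.stateAt_succ]
  cases anbnPA.stateAt α i <;> cases α i <;> simp [anbnPA]

theorem anbnPA_stateAt_succ_eq_readB :
    anbnPA.stateAt α (i + 1) = .readB ↔
      (anbnPA.stateAt α i = .readA ∨ anbnPA.stateAt α i = .readB) ∧ α i = false := by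
  rw [DetPA.stateAt_succ]
  cases anbnPA.stateAt α i <;> cases α i <;> simp [anbnPA]

theorem anbnPA_stateAt_eq_readA : anbnPA.stateAt α i = .readA ↔ ∀ j < i, α j = true := by
  induction i with
  | zero => simp [DetPA.stateAt, DetPA.run, anbnPA]
  | succ i ih => rw [anbnPA_stateAt_succ_eq_readA, ih, Nat.forall_lt_succ_right]

theorem anbnPA_stateAt_eq_readB : anbnPA.stateAt α i = .readB ↔
    ∃ m < i, (∀ j < m, α j = true) ∧ ∀ j, m ≤ j → j < i → α j = false := by
  induction i with
  | zero => simp [DetPA.stateAt, DetPA.run, anbnPA]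
  | succ i ih =>
    rw [anbnPA_stateAt_succ_eq_readB, anbnPA_stateAt_eq_readA, ih]
    constructor
    · rintro ⟨ha | ⟨m, hm, ha, hb⟩, hi⟩
      · exact ⟨i, by omega, ha, fun j hij hj => by rwa [show j = i by omega]⟩
      · refine ⟨m, by omega, ha, fun j hmj hj => ?_⟩
        rcases Nat.lt_succ_iff_lt_or_eq.mp hj with hj | rfl
        exacts [hb j hmj hj, hi]
    · rintro ⟨m, hm, ha, hb⟩
      refine ⟨?_, hb i (by omega) (by omega)⟩
      rcases Nat.lt_succ_iff_lt_or_eq.mp hm with hm | rfl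
      exacts [Or.inr ⟨m, hm, ha, fun j hmj hj => hb j hmj (by omega)⟩, Or.inl ha]

theorem anbnPA_vecSum {m k : ℕ} (ha : ∀ j < m, α j = true)
    (hb : ∀ j, m ≤ j → j < m + k → α j = false) : anbnPA.vecSum α 0 (m + k) = ![m, k] := by
  rw [DetPA.vecSum, ← Finset.sum_Ico_consecutive _ (Nat.zero_le m) (Nat.le_add_right m k)]
  have hA : ∀ j ∈ Finset.Ico 0 m, anbnPA.step α j = ![1, 0] := fun j hj => by
    have hj := (Finset.mem_Ico.mp hj).2
    have hst : anbnPA.stateAt α j = .readA :=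
      anbnPA_stateAt_eq_readA.mpr fun l hl => ha l (by omega)
    rw [DetPA.step, hst, ha j hj]
    rfl
  have hB : ∀ j ∈ Finset.Ico m (m + k), anbnPA.step α j = ![0, 1] := fun j hj => by
    obtain ⟨hmj, hj⟩ := Finset.mem_Ico.mp hj
    have hst := (anbnPA_stateAt_succ_eq_readB (i := j)).mp (anbnPA_stateAt_eq_readB.mpr
      ⟨m, by omega, ha, fun l hml hl => hb l hml (by omega)⟩) |>.1
    rcases hst with hst | hst <;> rw [DetPA.step, hst, hb j hmj hj] <;> rfl
  rw [Finset.sum_congr rfl hA, Finset.sum_congr rfl hB]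
  ext l
  fin_cases l <;> simp

theorem lanbnPrefix_eq_reachAccept : LanbnPrefix = {α | anbnPA.ReachAccept α} := by
  ext α
  constructor
  · rintro ⟨n, hn, ha, hb⟩
    have hb' : ∀ j, n ≤ j → j < n + n → α j = false := fun j h1 h2 => hb j h1 (by omega)
    refine ⟨n + n, by omega, anbnPA_stateAt_eq_readB.mpr ⟨n, by omega, ha, hb'⟩, ?_⟩
    rw [anbnPA_vecSum ha hb']
    rfl
  · rintro ⟨i, hi, hreadB, hC⟩
    obtain ⟨m, hm, ha, hb⟩ := anbnPA_stateAt_eq_readB.mp hreadB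
    obtain ⟨k, rfl⟩ := Nat.exists_eq_add_of_le hm.le
    have hmk : m = k := by
      rw [anbnPA_vecSum ha hb] at hC
      exact hC
    exact ⟨m, by omega, ha, fun j h1 h2 => hb j h1 (by omega)⟩

end anbnPA

/-- `{aⁿbⁿ | n ≥ 1}·{a,b}^ω` is deterministic reachability PA recognizable
but not deterministic strong reset PA recognizable. -/
theorem detReach_not_detStrongReset :
    DetReachRecog LanbnPrefix ∧ ¬ DetStrongResetRecog LanbnPrefix := by
  refine ⟨⟨2, AnBnState, inferInstance, anbnPA, anbnPA_C_semiLin, lanbnPrefix_eq_reachAccept⟩, ?_⟩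
  rintro ⟨d, Q, hQ, A, -, hL⟩
  have haccept : ∀ α ∈ LanbnPrefix, A.StrongResetAccept α := fun α hα => by rw [hL] at hα; exact hα
  obtain ⟨q, hq⟩ := Finite.exists_infinite_fiber (A.stateAt fun _ => true)
  replace hq := Set.infinite_coe_iff.mp hq
  obtain ⟨n₀, hn₀, hn₀pos⟩ := hq.exists_gt 0
  obtain ⟨i, hi, -, hiacc⟩ := (haccept _ (aPowBOmega_mem hn₀pos)).1 (n₀ + 1)
  obtain ⟨n, hn, hin⟩ := hq.exists_gt i
  obtain ⟨n', hn', hnn'⟩ := hq.exists_gt n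
  have hnacc : A.acc (A.stateAt (aPowBOmega n) (n + (i - n₀))) := by
    rwa [A.stateAt_aPowBOmega_add_eq (hn.trans hn₀.symm), Nat.add_sub_cancel' (by omega)]
  refine aPowBPowAOmega_not_mem hnn' ?_
  rw [hL]
  exact A.strongResetAccept_aPowBPowAOmega hnn' (hn'.trans hn.symm) (by omega) (by omega) hnacc
    (haccept _ (aPowBOmega_mem (by omega))) (haccept _ (aPowBPowAOmega_self_mem (by omega)))
end
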